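/- Fix a ∈ ℝ and c ∈ ℂ with c ≠ 0, set b = 0 and E = a, and set Δ = (a² + |c|² + 1 − E²)² − 4|c|². Then: (i) Δ > 0 if and only if |c| ≠ 1; (ii) there exists a nonzero ℓ²-solution of the half-line eigenvalue equation if and only if |c| < 1; (iii) if |c| < 1, then Sol(a, 0, c, a) = ℂ·e₁ when a ≠ 0, and Sol(0, 0, c, 0) is the two-dimensional span of e₁ and e₄ when a = 0. -/

import Mathlib

noncomputable section

open scoped ComplexConjugate

/-- The on-site matrix `V` of the local model. -/
def Vmat (a : ℝ) (b c : ℂ) : Matrix (Fin 4) (Fin 4) ℂ :=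
  !![(a : ℂ), conj c, 0, conj b;
     c, -(a : ℂ), conj b, 0;
     0, b, (a : ℂ), -c;
     b, 0, -(conj c), -(a : ℂ)]

/-- The hopping matrix `A` of the local model. -/
def Amat : Matrix (Fin 4) (Fin 4) ℂ :=
  !![0, -1, 0, 0;
     0, 0, 0, 0;
     0, 0, 0, 0;
     0, 0, 1, 0]

/-- `ψ : ℕ → (Fin 4 → ℂ)` (with `ψ n` standing for the value at the site `n + 1` of the
half-line `{1, 2, 3, …}`) solves the half-line eigenvalue equation `(H♯ − E)ψ = 0`:
`(V − E·I)ψ(1) + A*ψ(2) = 0` and `Aψ(n) + (V − E·I)ψ(n+1) + A*ψ(n+2) = 0` for all `n ≥ 1`. -/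
def IsSolSeq (a : ℝ) (b c : ℂ) (E : ℝ) (ψ : ℕ → Fin 4 → ℂ) : Prop :=
  (Vmat a b c - (E : ℂ) • 1).mulVec (ψ 0) + (Amat.conjTranspose).mulVec (ψ 1) = 0 ∧
    ∀ n : ℕ,
      Amat.mulVec (ψ n) + (Vmat a b c - (E : ℂ) • 1).mulVec (ψ (n + 1)) +
        (Amat.conjTranspose).mulVec (ψ (n + 2)) = 0

/-- The `ℓ²` condition: `∑_{n ≥ 1} ‖ψ(n)‖² < ∞`. -/
def IsL2Seq (ψ : ℕ → Fin 4 → ℂ) : Prop :=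
  Summable fun n => ∑ i, ‖ψ n i‖ ^ 2

/-- The space `Sol(a, b, c, E)` of `ℓ²`-solutions of the half-line eigenvalue equation. -/
def Sol (a : ℝ) (b c : ℂ) (E : ℝ) : Set (ℕ → Fin 4 → ℂ) :=
  {ψ | IsSolSeq a b c E ψ ∧ IsL2Seq ψ}

/-- The sequence `e₁` with `e₁(n) = (c^{n−1}, 0, 0, 0)` (convention `0⁰ = 1`). -/
def eSeq₁ (c : ℂ) : ℕ → Fin 4 → ℂ := fun n => ![c ^ n, 0, 0, 0]

/-- The sequence `e₄` with `e₄(n) = (0, 0, 0, c^{n−1})` (convention `0⁰ = 1`). -/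
def eSeq₄ (c : ℂ) : ℕ → Fin 4 → ℂ := fun n => ![0, 0, 0, c ^ n]

/-! With `b = 0` and `E = a` the eigenvalue equation decouples into scalar recurrences: the
second component vanishes, the first and fourth are geometric with ratio `c`, and the third obeys
`ψ₃(n) = c̄ ψ₃(n+1) + 2a ψ₄(n+1)` with boundary condition `c̄ ψ₃(1) + 2a ψ₄(1) = 0`.
For `|c| ≥ 1` an `ℓ²` solution has decaying geometric components, so they vanish, and then so
does the third. For `|c| ≤ 1` the combination `v(n) = (1 - |c|²) ψ₃(n) - 2a ψ₄(n+1)` satisfies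
`v(n) = c̄ v(n+1)` and decays, hence `v = 0`; with the boundary condition this gives `a ψ₄ = 0`,
after which `ψ₃ = 0`. Part (i) is the identity `Δ = (|c|² - 1)²`. (Components and sites are
numbered from 1 here and from 0 in the code.) -/

open Filter Topology Matrix

theorem eq_zero_of_norm_le_norm_succ {E : Type*} [NormedAddCommGroup E] {u : ℕ → E}
    (hu : ∀ n, ‖u n‖ ≤ ‖u (n + 1)‖) (h : Tendsto u atTop (𝓝 0)) (n : ℕ) : u n = 0 :=
  norm_le_zero_iff.1 <|
    (monotone_nat_of_le_succ hu).ge_of_tendsto (tendsto_zero_iff_norm_tendsto_zero.1 h) n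

theorem eq_pow_mul_of_succ {M : Type*} [Monoid M] {u : ℕ → M} {c : M}
    (hu : ∀ n, u (n + 1) = c * u n) (n : ℕ) : u n = c ^ n * u 0 := by
  induction n with
  | zero => simp
  | succ n ih => rw [hu, ih, pow_succ', mul_assoc]

theorem IsL2Seq.tendsto_apply {ψ : ℕ → Fin 4 → ℂ} (h : IsL2Seq ψ) (i : Fin 4) :
    Tendsto (fun n => ψ n i) atTop (𝓝 0) := by
  have hsq : Tendsto (fun n => ‖ψ n i‖ ^ 2) atTop (𝓝 0) :=
    squeeze_zero (fun n => by positivity)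
      (fun n => Finset.single_le_sum (f := fun j => ‖ψ n j‖ ^ 2) (fun j _ => by positivity)
        (Finset.mem_univ i)) h.tendsto_atTop_zero
  rw [tendsto_zero_iff_norm_tendsto_zero]
  simpa [Real.sqrt_sq (norm_nonneg _)] using hsq.sqrt

lemma Amat_mulVec (v : Fin 4 → ℂ) : Amat *ᵥ v = ![-v 1, 0, 0, v 2] := by
  ext i; fin_cases i <;> simp [Amat, mulVec, dotProduct, Fin.sum_univ_four]

lemma Amat_conjTranspose_mulVec (v : Fin 4 → ℂ) : Amatᴴ *ᵥ v = ![0, -v 0, v 3, 0] := by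
  ext i; fin_cases i <;> simp [Amat, mulVec, dotProduct, Fin.sum_univ_four]

lemma Vmat_zero_sub_mulVec (a : ℝ) (c : ℂ) (v : Fin 4 → ℂ) :
    (Vmat a 0 c - (a : ℂ) • 1) *ᵥ v =
      ![conj c * v 1, c * v 0 - 2 * a * v 1, -c * v 3, -conj c * v 2 - 2 * a * v 3] := by
  ext i; fin_cases i <;> simp [Vmat, mulVec, dotProduct, Fin.sum_univ_four] <;> ring

section

variable {a : ℝ} {c : ℂ} {ψ : ℕ → Fin 4 → ℂ}

lemma isSolSeq_zero_iff : IsSolSeq a 0 c a ψ ↔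
    (conj c * ψ 0 1 = 0 ∧ c * ψ 0 0 - 2 * a * ψ 0 1 + -ψ 1 0 = 0 ∧
      -c * ψ 0 3 + ψ 1 3 = 0 ∧ -conj c * ψ 0 2 - 2 * a * ψ 0 3 = 0) ∧
    ∀ n, -ψ n 1 + conj c * ψ (n + 1) 1 = 0 ∧
      c * ψ (n + 1) 0 - 2 * a * ψ (n + 1) 1 + -ψ (n + 2) 0 = 0 ∧
      -c * ψ (n + 1) 3 + ψ (n + 2) 3 = 0 ∧
      ψ n 2 + (-conj c * ψ (n + 1) 2 - 2 * a * ψ (n + 1) 3) = 0 := by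
  simp only [IsSolSeq, Amat_mulVec, Amat_conjTranspose_mulVec, Vmat_zero_sub_mulVec,
    cons_add_cons, cons_eq_zero_iff, empty_add_empty, zero_empty, and_true, add_zero, zero_add]

namespace IsSolSeq

lemma apply_one (hc : c ≠ 0) (h : IsSolSeq a 0 c a ψ) (n : ℕ) : ψ n 1 = 0 := by
  rw [isSolSeq_zero_iff] at h
  have hc' : conj c ≠ 0 := (map_ne_zero _).2 hc
  induction n with
  | zero => exact (mul_eq_zero.1 h.1.1).resolve_left hc'
  | succ n ih =>
    have hrec := (h.2 n).1
    rw [ih, neg_zero, zero_add] at hrec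
    exact (mul_eq_zero.1 hrec).resolve_left hc'

lemma apply_zero (hc : c ≠ 0) (h : IsSolSeq a 0 c a ψ) (n : ℕ) : ψ n 0 = c ^ n * ψ 0 0 := by
  refine eq_pow_mul_of_succ (u := (ψ · 0)) (fun n => ?_) n
  have h1 := h.apply_one hc
  rw [isSolSeq_zero_iff] at h
  cases n with
  | zero => linear_combination -h.1.2.1 - 2 * a * h1 0
  | succ n => linear_combination -(h.2 n).2.1 - 2 * a * h1 (n + 1)

lemma apply_three (h : IsSolSeq a 0 c a ψ) (n : ℕ) : ψ n 3 = c ^ n * ψ 0 3 := by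
  refine eq_pow_mul_of_succ (u := (ψ · 3)) (fun n => ?_) n
  rw [isSolSeq_zero_iff] at h
  cases n with
  | zero => linear_combination h.1.2.2.1
  | succ n => linear_combination (h.2 n).2.2.1

lemma apply_two (h : IsSolSeq a 0 c a ψ) (n : ℕ) :
    ψ n 2 = conj c * ψ (n + 1) 2 + 2 * a * ψ (n + 1) 3 := by
  rw [isSolSeq_zero_iff] at h
  linear_combination (h.2 n).2.2.2

lemma boundary (h : IsSolSeq a 0 c a ψ) : conj c * ψ 0 2 + 2 * a * ψ 0 3 = 0 := by
  rw [isSolSeq_zero_iff] at h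
  linear_combination -h.1.2.2.2

end IsSolSeq

lemma IsSolSeq.mul_apply_zero_three_eq_zero (h : IsSolSeq a 0 c a ψ) (hl : IsL2Seq ψ)
    (hc1 : ‖c‖ ≤ 1) : (a : ℂ) * ψ 0 3 = 0 := by
  set v : ℕ → ℂ := fun n => (1 - conj c * c) * ψ n 2 - 2 * a * ψ (n + 1) 3 with hv
  have hv_rec (n : ℕ) : v n = conj c * v (n + 1) := by
    simp only [hv]
    linear_combination (1 - conj c * c) * h.apply_two n +
      2 * a * conj c * (h.apply_three (n + 2) - c * h.apply_three (n + 1))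
  have hv_lim : Tendsto v atTop (𝓝 0) := by
    have := ((hl.tendsto_apply 2).const_mul (1 - conj c * c)).sub
      (((tendsto_add_atTop_iff_nat 1).2 (hl.tendsto_apply 3)).const_mul (2 * (a : ℂ)))
    simpa using this
  have hv0 : v 0 = 0 := eq_zero_of_norm_le_norm_succ (fun n => by
    rw [hv_rec n, norm_mul, RCLike.norm_conj]
    exact mul_le_of_le_one_left (norm_nonneg _) hc1) hv_lim 0
  simp only [hv, zero_add] at hv0
  linear_combination ((1 - conj c * c) * h.boundary - conj c * hv0 -
    2 * a * conj c * h.apply_three 1) / 2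

lemma smul_eSeq₁_add_smul_eSeq₄_apply (z w : ℂ) (n : ℕ) :
    (z • eSeq₁ c + w • eSeq₄ c) n = ![z * c ^ n, 0, 0, w * c ^ n] := by
  ext i; fin_cases i <;> simp [eSeq₁, eSeq₄]

lemma IsSolSeq.eq_smul_add_smul (hc : c ≠ 0) (h : IsSolSeq a 0 c a ψ)
    (ha : (a : ℂ) * ψ 0 3 = 0) : ψ = ψ 0 0 • eSeq₁ c + ψ 0 3 • eSeq₄ c := by
  have hc' : conj c ≠ 0 := (map_ne_zero _).2 hc
  have h2 (n : ℕ) : ψ n 2 = 0 := by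
    induction n with
    | zero =>
      have hb := h.boundary
      rw [mul_assoc, ha, mul_zero, add_zero] at hb
      exact (mul_eq_zero.1 hb).resolve_left hc'
    | succ n ih =>
      have hrec := h.apply_two n
      rw [ih, h.apply_three, mul_left_comm, mul_assoc, ha] at hrec
      simpa [hc'] using hrec.symm
  ext n i
  rw [smul_eSeq₁_add_smul_eSeq₄_apply]
  fin_cases i
  · simp [h.apply_zero hc n, mul_comm]
  · simp [h.apply_one hc n]
  · simp [h2 n]
  · simp [h.apply_three n, mul_comm]

lemma isSolSeq_smul_add_smul (z w : ℂ) (ha : (a : ℂ) * w = 0) :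
    IsSolSeq a 0 c a (z • eSeq₁ c + w • eSeq₄ c) := by
  have ha' : a = 0 ∨ w = 0 := by simpa using ha
  simp only [isSolSeq_zero_iff, smul_eSeq₁_add_smul_eSeq₄_apply]
  refine ⟨⟨?_, ?_, ?_, ?_⟩, fun n => ⟨?_, ?_, ?_, ?_⟩⟩ <;> simp <;> first | tauto | ring

lemma isL2Seq_smul_add_smul (hc1 : ‖c‖ < 1) (z w : ℂ) :
    IsL2Seq (z • eSeq₁ c + w • eSeq₄ c) := by
  have hterm (n : ℕ) : ∑ i, ‖(z • eSeq₁ c + w • eSeq₄ c) n i‖ ^ 2 =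
      (‖z‖ ^ 2 + ‖w‖ ^ 2) * (‖c‖ ^ 2) ^ n := by
    rw [smul_eSeq₁_add_smul_eSeq₄_apply]
    simp only [Fin.sum_univ_four, Fin.isValue, cons_val, Complex.norm_mul, norm_pow, norm_zero,
      mul_pow, ← pow_mul, ne_eq, OfNat.ofNat_ne_zero, not_false_eq_true, zero_pow, add_zero]
    ring
  refine ((summable_geometric_of_lt_one (by positivity) ?_).mul_left _).congr fun n =>
    (hterm n).symm
  nlinarith [norm_nonneg c]

lemma eq_zero_of_mem_sol_of_one_le_norm (hc : c ≠ 0) (hc1 : 1 ≤ ‖c‖) (hψ : ψ ∈ Sol a 0 c a) :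
    ψ = 0 := by
  obtain ⟨h, hl⟩ := hψ
  have hvanish (i : Fin 4) (hi : ∀ n, ψ n i = c ^ n * ψ 0 i) : ψ 0 i = 0 :=
    eq_zero_of_norm_le_norm_succ (u := (ψ · i)) (fun n => by
      rw [hi (n + 1), hi n, pow_succ', mul_assoc, norm_mul c]
      exact le_mul_of_one_le_left (norm_nonneg _) hc1) (hl.tendsto_apply i) 0
  have h0 := hvanish 0 (h.apply_zero hc)
  have h3 := hvanish 3 h.apply_three
  rw [h.eq_smul_add_smul hc (by rw [h3, mul_zero]), h0, h3, zero_smul, zero_smul, add_zero]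

lemma mem_sol_iff_of_norm_lt_one (hc : c ≠ 0) (hc1 : ‖c‖ < 1) :
    ψ ∈ Sol a 0 c a ↔ ∃ z w : ℂ, (a : ℂ) * w = 0 ∧ ψ = z • eSeq₁ c + w • eSeq₄ c := by
  constructor
  · rintro ⟨h, hl⟩
    have ha := h.mul_apply_zero_three_eq_zero hl hc1.le
    exact ⟨ψ 0 0, ψ 0 3, ha, h.eq_smul_add_smul hc ha⟩
  · rintro ⟨z, w, ha, rfl⟩
    exact ⟨isSolSeq_smul_add_smul z w ha, isL2Seq_smul_add_smul hc1 z w⟩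

lemma linearIndependent_eSeq₁_eSeq₄ : LinearIndependent ℂ ![eSeq₁ c, eSeq₄ c] := by
  refine LinearIndependent.pair_iff.2 fun s t hst => ⟨?_, ?_⟩
  · simpa [eSeq₁, eSeq₄] using congrFun (congrFun hst 0) 0
  · simpa [eSeq₁, eSeq₄] using congrFun (congrFun hst 0) 3

end

/-- Fix `a ∈ ℝ` and `c ∈ ℂ` with `c ≠ 0`, set `b = 0` and `E = a`, and set
`Δ = (a² + |c|² + 1 − E²)² − 4|c|²`. Then: (i) `Δ > 0` iff `|c| ≠ 1`; (ii) there exists a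
nonzero ℓ²-solution iff `|c| < 1`; (iii) if `|c| < 1`, then `Sol(a,0,c,a) = ℂ·e₁` when
`a ≠ 0`, and `Sol(0,0,c,0)` is the two-dimensional span of `e₁` and `e₄` when `a = 0`. -/
theorem stmt11 (a : ℝ) (c : ℂ) (hc : c ≠ 0) :
    ((a ^ 2 + ‖c‖ ^ 2 + 1 - a ^ 2) ^ 2 - 4 * ‖c‖ ^ 2 > 0 ↔ ‖c‖ ≠ 1) ∧
    ((∃ ψ ∈ Sol a 0 c a, ψ ≠ 0) ↔ ‖c‖ < 1) ∧
    (‖c‖ < 1 →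
      (a ≠ 0 → Sol a 0 c a = {ψ | ∃ z : ℂ, ψ = z • eSeq₁ c}) ∧
      (a = 0 →
        Sol a 0 c a = {ψ | ∃ z w : ℂ, ψ = z • eSeq₁ c + w • eSeq₄ c} ∧
        LinearIndependent ℂ ![eSeq₁ c, eSeq₄ c])) := by
  refine ⟨?_, ⟨?_, fun hc1 => ?_⟩,
    fun hc1 => ⟨fun ha => ?_, fun ha => ⟨?_, linearIndependent_eSeq₁_eSeq₄⟩⟩⟩
  · rw [show (a ^ 2 + ‖c‖ ^ 2 + 1 - a ^ 2) ^ 2 - 4 * ‖c‖ ^ 2 = (‖c‖ ^ 2 - 1) ^ 2 by ring,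
      gt_iff_lt, sq_pos_iff, sub_ne_zero, Ne,
      pow_eq_one_iff_of_nonneg (norm_nonneg c) two_ne_zero]
  · rintro ⟨ψ, hψ, hne⟩
    by_contra! hc1
    exact hne (eq_zero_of_mem_sol_of_one_le_norm hc hc1 hψ)
  · refine ⟨eSeq₁ c, (mem_sol_iff_of_norm_lt_one hc hc1).2 ⟨1, 0, mul_zero _, by simp⟩,
      fun h => ?_⟩
    simpa [eSeq₁] using congrFun (congrFun h 0) 0
  · ext ψ
    simp [mem_sol_iff_of_norm_lt_one hc hc1, ha]
  · ext ψ
    simp [mem_sol_iff_of_norm_lt_one hc hc1, ha]
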